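/- Let K, N, d be positive integers with d ≥ 1, N ≥ 2d, and (K+1)·d ≤ 2N. Then K < 2N and K − 1 < N². Consequently, in the square symmetric case M = N, whenever interference alignment is feasible (so that d ≤ (M+N)/(K+1) and N ≥ 2d hold), the proposed Grassmannian feedback scheme requires strictly fewer bits than normalized-channel quantization, i.e. (K−1)(N²−1) > N((K−1)N − N). -/
import Mathlib


/-- **Lemma (square symmetric case `M = N`).** If IA is feasible, i.e. `d ≥ 1`,
`N ≥ 2d` and `(K+1)d ≤ 2N`, then `K < 2N`, `K − 1 < N²`, and the proposed scheme
requires strictly fewer feedback bits: `(K−1)(N²−1) > N((K−1)N − N)`. -/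
theorem square_case_fewer_bits
    (K N d : ℕ) (hK : 0 < K) (hd : 1 ≤ d) (hN2d : 2 * d ≤ N)
    (hfeas : (K + 1) * d ≤ 2 * N) :
    K < 2 * N ∧ ((K : ℤ) - 1 < (N : ℤ) ^ 2) ∧
      ((K : ℤ) - 1) * ((N : ℤ) ^ 2 - 1) > (N : ℤ) * (((K : ℤ) - 1) * N - N) := by
  have hN2 : 2 ≤ N := le_trans (by omega) hN2d
  have hK2N : K < 2 * N := by nlinarith
  have h2 : (K : ℤ) - 1 < (N : ℤ) ^ 2 := by
    have : (K : ℤ) < 2 * N := by exact_mod_cast hK2N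
    have : (2 : ℤ) ≤ N := by exact_mod_cast hN2
    nlinarith
  refine ⟨hK2N, h2, ?_⟩
  nlinarith [sq_nonneg ((N : ℤ))]
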